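/- arXiv:2602.20847 — 2 statements merged into one kernel-verified Lean document; each statement's English description precedes it below -/
import Mathlib

section
/- Let p be a prime, K a field, and let O_w ⊆ O_u be valuation subrings of K (so O_u is a coarsening of O_w). Suppose the residue field of O_w has characteristic p, while the residue field of O_u has characteristic 0 and is algebraically closed. Then the Frobenius map x ↦ x^p is surjective on O_w/(p). -/
/-!
Since `O_u` has residue characteristic `0`, `p` is a unit of `O_u`, so the maximal ideal `m_u`,
which lies inside `O_w`, is contained in `p O_w`. Hence `O_w/(p)` is a quotient of `O_w/m_u`, the
image of `O_w` in the residue field `k_u`. That image is a valuation subring of `k_u`, hence closed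
under taking `p`-th roots inside the algebraically closed field `k_u`.
-/

open IsLocalRing

universe u

namespace ValuationSubring

variable {K : Type*} [Field K]

theorem mem_of_pow_mem (A : ValuationSubring K) {x : K} {n : ℕ} (hn : n ≠ 0)
    (hx : x ^ n ∈ A) : x ∈ A := by
  obtain ⟨m, rfl⟩ := Nat.exists_eq_succ_of_ne_zero hn
  rcases A.mem_or_inv_mem x with h | h
  · exact h
  · have hx' : x = x ^ (m + 1) * x⁻¹ ^ m := by
      rcases eq_or_ne x 0 with rfl | hx0
      · simp
      · rw [inv_pow, pow_succ', mul_inv_cancel_right₀ (pow_ne_zero m hx0)]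
    rw [hx']
    exact A.mul_mem _ _ hx (pow_mem h m)

variable {A B : ValuationSubring K}

theorem coe_mem_of_mem_maximalIdeal (h : A ≤ B) {b : B} (hb : b ∈ maximalIdeal B) :
    (b : K) ∈ A :=
  A.nonunits_subset (nonunits_le_nonunits.mpr h (coe_mem_nonunits_iff.mpr hb))

noncomputable def residueImage (h : A ≤ B) : ValuationSubring (ResidueField B) :=
  ofSubring ((residue B).comp (A.inclusion B h)).range fun c => by
    obtain ⟨b, rfl⟩ := residue_surjective c
    rcases A.mem_or_inv_mem (b : K) with hb | hb
    · exact Or.inl ⟨⟨b, hb⟩, rfl⟩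
    · rcases eq_or_ne b 0 with rfl | hb0
      · exact Or.inl ⟨0, by simp⟩
      · refine Or.inr ⟨⟨_, hb⟩, eq_inv_of_mul_eq_one_left ?_⟩
        rw [RingHom.comp_apply, ← map_mul, ← map_one (residue B)]
        exact congrArg _ (Subtype.ext (inv_mul_cancel₀ (by exact_mod_cast hb0)))

theorem mem_residueImage (h : A ≤ B) {c : ResidueField B} :
    c ∈ residueImage h ↔ ∃ a : A, residue B (A.inclusion B h a) = c :=
  mem_ofSubring _ _ _

theorem natCast_dvd_of_residue_eq_zero (h : A ≤ B) {n : ℕ} (hn : (n : ResidueField B) ≠ 0)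
    {a : A} (ha : residue B (A.inclusion B h a) = 0) : (n : A) ∣ a := by
  obtain ⟨u, hu⟩ := (residue_ne_zero_iff_isUnit (n : B)).mp (by rwa [map_natCast])
  have hmem : A.inclusion B h a * ↑u⁻¹ ∈ maximalIdeal B :=
    Ideal.mul_mem_right _ _ ((residue_eq_zero_iff _).mp ha)
  have hfactor : A.inclusion B h a = n * (A.inclusion B h a * ↑u⁻¹) := by
    rw [← hu, mul_left_comm, Units.mul_inv, mul_one]
  refine ⟨⟨_, coe_mem_of_mem_maximalIdeal h hmem⟩, Subtype.ext ?_⟩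
  exact (congrArg Subtype.val hfactor).trans (by push_cast; rfl)

end ValuationSubring

open ValuationSubring in
theorem frobenius_surjective_of_algclosed_coarsening_general (p : ℕ) (hp : p.Prime)
    {K : Type u} [Field K] (Ow Ou : ValuationSubring K) (hle : Ow ≤ Ou)
    (hures : CharZero (IsLocalRing.ResidueField Ou))
    (hualg : IsAlgClosed (IsLocalRing.ResidueField Ou)) :
    Function.Surjective (fun x : Ow ⧸ Ideal.span {(p : Ow)} => x ^ p) := by
  intro z
  obtain ⟨x, rfl⟩ := Ideal.Quotient.mk_surjective z
  obtain ⟨d, hd⟩ := IsAlgClosed.exists_pow_nat_eq (residue Ou (Ow.inclusion Ou hle x)) hp.pos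
  obtain ⟨y, hy⟩ := (mem_residueImage hle).mp <|
    (residueImage hle).mem_of_pow_mem hp.ne_zero ((mem_residueImage hle).mpr ⟨x, hd.symm⟩)
  refine ⟨Ideal.Quotient.mk _ y, ?_⟩
  dsimp only
  rw [← map_pow, Ideal.Quotient.eq, Ideal.mem_span_singleton]
  refine natCast_dvd_of_residue_eq_zero hle (Nat.cast_ne_zero.mpr hp.ne_zero) ?_
  rw [map_sub, map_sub, map_pow, map_pow, hy, hd, sub_self]

/-- If `O_w ⊆ O_u` are valuation subrings of `K`, the residue field of `O_w`
has characteristic `p`, and the residue field of `O_u` has characteristic `0` and is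
algebraically closed, then the Frobenius is surjective on `O_w/(p)`. -/
theorem frobenius_surjective_of_algclosed_coarsening (p : ℕ) (hp : p.Prime)
    {K : Type u} [Field K] (Ow Ou : ValuationSubring K) (hle : Ow ≤ Ou)
    (hwres : CharP (IsLocalRing.ResidueField Ow) p)
    (hures : CharZero (IsLocalRing.ResidueField Ou))
    (hualg : IsAlgClosed (IsLocalRing.ResidueField Ou)) :
    Function.Surjective (fun x : Ow ⧸ Ideal.span {(p : Ow)} => x ^ p) :=
  frobenius_surjective_of_algclosed_coarsening_general p hp Ow Ou hle hures hualg
end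

section
/- Let K be a field with a nontrivial valuation v : K → ℝ≥0, let K̂ be its completion with extended valuation v̂, and let ϖ ∈ K with 0 < v(ϖ) < 1. Then the ring homomorphism O_v/(ϖ) → O_{v̂}/(ϖ) induced by the inclusion K → K̂ is bijective, where O_v = {x ∈ K : v x ≤ 1}, O_{v̂} = {x ∈ K̂ : v̂ x ≤ 1}, and (ϖ) denotes the principal ideal generated by the image of ϖ in each valuation ring. -/
/-!
In a valuation ring `a ∣ b` exactly when `v b ≤ v a`, so congruence modulo `ϖ` is the relation
`v (x - y) ≤ v ϖ`. The inclusion `K → K̂` preserves valuations, which gives injectivity. For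
surjectivity, the ball `{y | v̂ (y - z) < v ϖ}` around `z ∈ O_v̂` is open and `K` is dense, so it
contains some `x ∈ K`; the ultrametric inequality puts `x` in `O_v`, and `x ≡ z` modulo `ϖ`.
-/

universe u

open UniformSpace (Completion)

namespace Valued

theorem isOpen_setOf_map_sub_lt {R Γ₀ : Type*} [Ring R] [LinearOrderedCommGroupWithZero Γ₀]
    [Valued R Γ₀] (z a : R) : IsOpen {y : R | v (y - z) < v a} := by
  simpa only [Set.preimage_ofPred_eq, Valuation.restrict_lt_iff] using
    (isOpen_ball R (v.restrict a)).preimage (continuous_sub_right z)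

variable {K Γ₀ : Type*} [Field K] [LinearOrderedCommGroupWithZero Γ₀] [Valued K Γ₀]

theorem exists_coe_sub_lt (z : Completion K) {a : K} (ha : a ≠ 0) :
    ∃ x : K, extensionValuation ((x : Completion K) - z) < v a := by
  obtain ⟨x, hx⟩ := Completion.denseRange_coe.exists_mem_open
    (isOpen_setOf_map_sub_lt z (a : Completion K)) ⟨z, by simpa [zero_lt_iff] using ha⟩
  rw [Set.mem_ofPred_eq, valuedCompletion_apply] at hx
  exact ⟨x, hx⟩

end Valued

namespace Valuation

variable {K L Γ₀ : Type*} [Field K] [Field L] [LinearOrderedCommGroupWithZero Γ₀]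

theorem mem_span_singleton_valuationSubring_iff {w : Valuation L Γ₀} {a b : w.valuationSubring} :
    a ∈ Ideal.span {b} ↔ w a ≤ w b := by
  rw [Ideal.mem_span_singleton, (valuationSubring.integers w).dvd_iff_le]
  rfl

variable {v : Valuation K Γ₀} {w : Valuation L Γ₀} (f : v.valuationSubring →+* w.valuationSubring)
  {a : v.valuationSubring} {b : w.valuationSubring}
  (hle : Ideal.span {a} ≤ (Ideal.span {b}).comap f)

theorem quotientMap_span_singleton_injective (hf : ∀ x, w (f x) = v x) (hab : w b = v a) :
    Function.Injective (Ideal.quotientMap _ f hle) := by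
  refine Ideal.quotientMap_injective' fun x hx => ?_
  rwa [Ideal.mem_comap, mem_span_singleton_valuationSubring_iff, hf, hab,
    ← mem_span_singleton_valuationSubring_iff] at hx

theorem quotientMap_span_singleton_surjective
    (happrox : ∀ z : w.valuationSubring, ∃ x, w ↑(f x - z) ≤ w b) :
    Function.Surjective (Ideal.quotientMap _ f hle) := by
  refine Ideal.Quotient.mk_surjective.forall.mpr fun z => ?_
  obtain ⟨x, hx⟩ := happrox z
  exact ⟨Ideal.Quotient.mk _ x, by
    rwa [Ideal.quotientMap_mk, Ideal.Quotient.eq, mem_span_singleton_valuationSubring_iff]⟩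

end Valuation

theorem quotient_valuation_ring_completion_bijective_general {K : Type u} [Field K]
    (v : Valuation K NNReal) (ϖ : K) (h0 : 0 < v ϖ) :
    letI : Valued K NNReal := Valued.mk' v
    ∀ vhat : Valuation (UniformSpace.Completion K) NNReal,
      vhat = Valued.extensionValuation →
    ∀ ϖv : v.valuationSubring, (ϖv : K) = ϖ →
    ∀ ϖw : vhat.valuationSubring,
      ((ϖw : UniformSpace.Completion K) = ((ϖ : K) : UniformSpace.Completion K)) →
    ∀ f : v.valuationSubring →+* vhat.valuationSubring,
      (∀ x : v.valuationSubring,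
        ((f x : vhat.valuationSubring) : UniformSpace.Completion K)
          = ((x : K) : UniformSpace.Completion K)) →
    ∀ hle : Ideal.span {ϖv} ≤ (Ideal.span {ϖw}).comap f,
      Function.Bijective (Ideal.quotientMap (Ideal.span {ϖw}) f hle) := by
  let _ : Valued K NNReal := Valued.mk' v
  rintro vhat rfl ϖv rfl ϖw hϖw f hf hle
  have hcoe (x : K) : Valued.extensionValuation (x : Completion K) = v x :=
    Valued.extensionValuation_apply_coe x
  have hf_val (x : v.valuationSubring) : Valued.extensionValuation (f x : Completion K) = v x := by
    rw [hf, hcoe]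
  have hϖ : Valued.extensionValuation (ϖw : Completion K) = v ϖv := by
    rw [hϖw, hcoe]
  refine ⟨Valuation.quotientMap_span_singleton_injective f hle hf_val hϖ,
    Valuation.quotientMap_span_singleton_surjective f hle fun z => ?_⟩
  obtain ⟨x, hx⟩ := Valued.exists_coe_sub_lt (z : Completion K) (v.ne_zero_iff.mp h0.ne')
  have hx_int : v x ≤ 1 := by
    rw [← hcoe, ← sub_add_cancel (x : Completion K) z]
    exact Valued.extensionValuation.map_add_le (hx.le.trans ϖv.2) z.2
  refine ⟨⟨x, hx_int⟩, ?_⟩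
  rw [hϖ, AddSubgroupClass.coe_sub, hf]
  exact hx.le

/-- For a nontrivially valued field `(K, v)` and `ϖ ∈ K` with
`0 < v ϖ < 1`, the ring homomorphism `O_v/(ϖ) → O_v̂/(ϖ)` induced by the inclusion of `K` into
its completion `K̂` is bijective.  Here `v̂` is the canonical extension of `v` to the
completion, `ϖv` and `ϖw` denote `ϖ` viewed as an element of the valuation ring of `K` and of
`K̂` respectively, and `f` is the ring homomorphism `O_v → O_v̂` induced by the inclusion
`K → K̂`. -/
theorem quotient_valuation_ring_completion_bijective {K : Type u} [Field K]
    (v : Valuation K NNReal) (hnt : ∃ x : Kˣ, v (x : K) ≠ 1)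
    (ϖ : K) (h0 : 0 < v ϖ) (h1 : v ϖ < 1) :
    letI : Valued K NNReal := Valued.mk' v
    ∀ vhat : Valuation (UniformSpace.Completion K) NNReal,
      vhat = Valued.extensionValuation →
    ∀ ϖv : v.valuationSubring, (ϖv : K) = ϖ →
    ∀ ϖw : vhat.valuationSubring,
      ((ϖw : UniformSpace.Completion K) = ((ϖ : K) : UniformSpace.Completion K)) →
    ∀ f : v.valuationSubring →+* vhat.valuationSubring,
      (∀ x : v.valuationSubring,
        ((f x : vhat.valuationSubring) : UniformSpace.Completion K)
          = ((x : K) : UniformSpace.Completion K)) →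
    ∀ hle : Ideal.span {ϖv} ≤ (Ideal.span {ϖw}).comap f,
      Function.Bijective (Ideal.quotientMap (Ideal.span {ϖw}) f hle) :=
  quotient_valuation_ring_completion_bijective_general v ϖ h0
end
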